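/- arXiv:nlin/0512067 — 10 statements merged into one kernel-verified Lean document; each statement's English description precedes it below -/
import Mathlib

section
/- Let L_0, M_0 be symmetric n×n real matrices and L_1, M_1 strictly lower triangular n×n real matrices, and set L = L_0 + L_1 − L_1ᵀ and M = M_0 + M_1 − M_1ᵀ. Then tr(L_0 M_0 + L_1 M_1ᵀ + L_1ᵀ M_1) = tr(L Mᵀ). (This expresses that the invariant trace form of the Kupershmidt algebra elements L_λ = L_0 + L_1 λ + L_1ᵀ λ⁻¹ and M_λ = M_0 + M_1 λ + M_1ᵀ λ⁻¹ is carried by the isomorphism Φ(L_λ) = L_0 + L_1 − L_1ᵀ to the form ((L,M)) = tr(L Mᵀ) on gl(n).) -/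
open Matrix

noncomputable section

/-- Symmetric part of a matrix. -/
def symPart {n : ℕ} (L : Matrix (Fin n) (Fin n) ℝ) : Matrix (Fin n) (Fin n) ℝ :=
  (1/2 : ℝ) • (L + Lᵀ)

/-- Antisymmetric part of a matrix. -/
def skewPart {n : ℕ} (L : Matrix (Fin n) (Fin n) ℝ) : Matrix (Fin n) (Fin n) ℝ :=
  (1/2 : ℝ) • (L - Lᵀ)

/-- Commutator. -/
def mcomm {n : ℕ} (A B : Matrix (Fin n) (Fin n) ℝ) : Matrix (Fin n) (Fin n) ℝ :=
  A * B - B * A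

/-- Jordan product. -/
def jord {n : ℕ} (A B : Matrix (Fin n) (Fin n) ℝ) : Matrix (Fin n) (Fin n) ℝ :=
  (1/2 : ℝ) • (A * B + B * A)

/-- The non-standard Lie bracket [[L,M]]. -/
def dbr {n : ℕ} (L M : Matrix (Fin n) (Fin n) ℝ) : Matrix (Fin n) (Fin n) ℝ :=
  mcomm (symPart L) (symPart M) - mcomm (skewPart L) (skewPart M)
    - mcomm (symPart L) (skewPart M) - mcomm (skewPart L) (symPart M)

/-- The commutative product L ⊙ M. -/
def odot {n : ℕ} (L M : Matrix (Fin n) (Fin n) ℝ) : Matrix (Fin n) (Fin n) ℝ :=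
  jord (symPart L) (symPart M) - jord (skewPart L) (skewPart M)
    + jord (skewPart L) (symPart M) + jord (symPart L) (skewPart M)

/-- ρ(L) = L_p − L_n: strictly upper part minus strictly lower part. -/
def rho {n : ℕ} (L : Matrix (Fin n) (Fin n) ℝ) : Matrix (Fin n) (Fin n) ℝ :=
  Matrix.of fun i j => if i < j then L i j else if j < i then -(L i j) else 0

/-- a(L) = ρ(L_S). -/
def aMap {n : ℕ} (L : Matrix (Fin n) (Fin n) ℝ) : Matrix (Fin n) (Fin n) ℝ :=
  rho (symPart L)

/-- The scalar product ((L,M)) = tr(L Mᵀ). -/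
def form {n : ℕ} (L M : Matrix (Fin n) (Fin n) ℝ) : ℝ :=
  (L * Mᵀ).trace

/-- The trace form of the Kupershmidt algebra is carried by Φ to ((L,M)) = tr(L Mᵀ). -/
theorem stmt_1 {n : ℕ} (L0 M0 L1 M1 : Matrix (Fin n) (Fin n) ℝ)
    (hL0 : L0ᵀ = L0) (hM0 : M0ᵀ = M0)
    (hL1 : ∀ i j : Fin n, i ≤ j → L1 i j = 0)
    (hM1 : ∀ i j : Fin n, i ≤ j → M1 i j = 0) :
    (L0 * M0 + L1 * M1ᵀ + L1ᵀ * M1).trace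
      = ((L0 + L1 - L1ᵀ) * (M0 + M1 - M1ᵀ)ᵀ).trace := by
  have h11 : (L1 * M1).trace = 0 := by
    simp only [Matrix.trace, Matrix.diag_apply, Matrix.mul_apply]
    refine Finset.sum_eq_zero fun i _ => Finset.sum_eq_zero fun k _ => ?_
    rcases le_or_gt i k with h | h
    · rw [hL1 i k h, zero_mul]
    · rw [hM1 k i h.le, mul_zero]
  have h11' : (L1ᵀ * M1ᵀ).trace = 0 := by
    rw [← Matrix.transpose_mul, Matrix.trace_transpose, Matrix.trace_mul_comm, h11]
  have hc1 : (L0 * M1ᵀ).trace = (L0 * M1).trace := by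
    rw [← Matrix.trace_transpose (L0 * M1ᵀ), Matrix.transpose_mul, Matrix.transpose_transpose,
      hL0, Matrix.trace_mul_comm]
  have hc2 : (L1 * M0).trace = (L1ᵀ * M0).trace := by
    rw [← Matrix.trace_transpose (L1ᵀ * M0), Matrix.transpose_mul, hM0, Matrix.transpose_transpose,
      Matrix.trace_mul_comm]
  simp only [Matrix.transpose_sub, Matrix.transpose_add, hM0, Matrix.transpose_transpose,
    Matrix.mul_sub, Matrix.sub_mul, Matrix.mul_add, Matrix.add_mul, Matrix.trace_sub,
    Matrix.trace_add] at *
  linarith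
end
end

section
/- The bracket [[L,M]] = [L_S,M_S] − [L_A,M_A] − [L_S,M_A] − [L_A,M_S] on n×n real matrices is a Lie bracket: it is bilinear, antisymmetric ([[L,M]] = −[[M,L]]), and satisfies the Jacobi identity [[L,[[M,N]]]] + [[M,[[N,L]]]] + [[N,[[L,M]]]] = 0 for all n×n real matrices L, M, N. -/
open Matrix

noncomputable section

lemma dbr_eq {n : ℕ} (L M : Matrix (Fin n) (Fin n) ℝ) :
    dbr L M = (1/2 : ℝ) • (Lᵀ*M + Lᵀ*Mᵀ - M*Lᵀ - Mᵀ*Lᵀ - L*M + L*Mᵀ + M*L - Mᵀ*L) := by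
  simp only [dbr, mcomm, symPart, skewPart, smul_mul_assoc, mul_smul_comm, smul_smul,
    add_mul, mul_add, sub_mul, mul_sub]
  module

/-- [[·,·]] is a Lie bracket: bilinear, antisymmetric and satisfying Jacobi. -/
theorem stmt_2 {n : ℕ} :
    (∀ (a b : ℝ) (L L' M : Matrix (Fin n) (Fin n) ℝ),
        dbr (a • L + b • L') M = a • dbr L M + b • dbr L' M) ∧
    (∀ (a b : ℝ) (L M M' : Matrix (Fin n) (Fin n) ℝ),
        dbr L (a • M + b • M') = a • dbr L M + b • dbr L M') ∧
    (∀ L M : Matrix (Fin n) (Fin n) ℝ, dbr L M = - dbr M L) ∧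
    (∀ L M N : Matrix (Fin n) (Fin n) ℝ,
        dbr L (dbr M N) + dbr M (dbr N L) + dbr N (dbr L M) = 0) := by
  refine ⟨fun a b L L' M => ?_, fun a b L M M' => ?_, fun L M => ?_, fun L M N => ?_⟩
  · simp only [dbr_eq, transpose_add, transpose_smul, add_mul, mul_add, smul_mul_assoc,
      mul_smul_comm, smul_smul, smul_add, smul_sub]
    module
  · simp only [dbr_eq, transpose_add, transpose_smul, add_mul, mul_add, smul_mul_assoc,
      mul_smul_comm, smul_smul, smul_add, smul_sub]
    module
  · simp only [dbr_eq]
    module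
  · simp only [dbr_eq, transpose_smul, transpose_add, transpose_sub, transpose_mul,
      transpose_transpose, smul_mul_assoc, mul_smul_comm, smul_smul, add_mul, mul_add,
      sub_mul, mul_sub, smul_add, smul_sub, mul_assoc]
    module
end
end

section
/- For all n×n real matrices L, M, N, the invariance relation ((L,[[M,N]])) = ((M,[[N,L]])) holds. -/
open Matrix

noncomputable section

/-- Invariance: ((L,[[M,N]])) = ((M,[[N,L]])). -/
theorem stmt_3 {n : ℕ} (L M N : Matrix (Fin n) (Fin n) ℝ) :
    form L (dbr M N) = form M (dbr N L) := by
  have cyc : ∀ A B C : Matrix (Fin n) (Fin n) ℝ,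
      (A*(B*C)).trace = (B*(C*A)).trace := by
    intro A B C; rw [trace_mul_comm A (B*C), mul_assoc]
  have tp : ∀ A B C : Matrix (Fin n) (Fin n) ℝ,
      (A*(B*C)).trace = (Cᵀ*(Bᵀ*Aᵀ)).trace := by
    intro A B C
    rw [← trace_transpose (A*(B*C))]
    simp [transpose_mul, mul_assoc]
  simp only [form, dbr, mcomm, symPart, skewPart, transpose_sub, transpose_add, transpose_smul,
    transpose_mul, transpose_transpose, smul_mul_assoc, mul_smul_comm, smul_smul,
    mul_add, add_mul, mul_sub, sub_mul, smul_add, smul_sub, trace_add, trace_sub, trace_smul,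
    mul_assoc, smul_eq_mul]
  have h1 : (M*(Lᵀ*Nᵀ)).trace = (L*(Mᵀ*N)).trace := by
    rw [tp]; simp only [transpose_transpose]; rw [cyc]
  have h2 : (M*(Lᵀ*N)).trace = (L*(Mᵀ*Nᵀ)).trace := by
    rw [tp]; simp only [transpose_transpose]; rw [cyc]
  have h3 : (M*(L*Nᵀ)).trace = (L*(Nᵀ*M)).trace := cyc _ _ _
  have h4 : (M*(L*N)).trace = (L*(N*M)).trace := cyc _ _ _
  have h5 : (M*(Nᵀ*Lᵀ)).trace = (L*(N*Mᵀ)).trace := by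
    rw [tp]; simp only [transpose_transpose]
  have h6 : (M*(Nᵀ*L)).trace = (L*(M*Nᵀ)).trace := by rw [cyc, cyc]
  have h7 : (M*(N*Lᵀ)).trace = (L*(Nᵀ*Mᵀ)).trace := by
    rw [tp]; simp only [transpose_transpose]
  have h8 : (M*(N*L)).trace = (L*(M*N)).trace := by rw [cyc, cyc]
  rw [h1, h2, h3, h4, h5, h6, h7, h8]
  ring
end
end

section
/- For all n×n real matrices L, M, N, the commutative product ⊙ satisfies ((L⊙M, N)) = ((L, M⊙N)). -/
open Matrix

noncomputable section

/-- Expansion of the odot product. -/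
lemma odot_eq {n : ℕ} (L M : Matrix (Fin n) (Fin n) ℝ) :
    odot L M = (1/4 : ℝ) • (L*M + M*L + L*Mᵀ + Lᵀ*M + M*Lᵀ + Mᵀ*L - Lᵀ*Mᵀ - Mᵀ*Lᵀ) := by
  simp only [odot, jord, symPart, skewPart, smul_add, smul_sub, add_mul, mul_add, sub_mul,
    mul_sub, smul_mul_assoc, mul_smul_comm, smul_smul]
  norm_num
  module

/-- ((L⊙M, N)) = ((L, M⊙N)). -/
theorem stmt_4 {n : ℕ} (L M N : Matrix (Fin n) (Fin n) ℝ) :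
    form (odot L M) N = form L (odot M N) := by
  simp only [form, odot_eq, Matrix.transpose_smul, Matrix.transpose_add, Matrix.transpose_sub,
    Matrix.transpose_mul, Matrix.transpose_transpose, Matrix.smul_mul, Matrix.mul_smul,
    Matrix.add_mul, Matrix.sub_mul, Matrix.mul_add, Matrix.mul_sub,
    Matrix.trace_add, Matrix.trace_sub, Matrix.trace_smul, smul_eq_mul]
  have tr3 : ∀ A B C : Matrix (Fin n) (Fin n) ℝ, (A*(B*C)).trace = (B*(C*A)).trace := by
    intro A B C
    rw [← mul_assoc, ← mul_assoc]; exact (Matrix.trace_mul_cycle B C A).symm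
  have h1 : (L*M*Nᵀ).trace = (L*(M*Nᵀ)).trace := by rw [mul_assoc]
  have h2 : (M*L*Nᵀ).trace = (L*(Nᵀ*M)).trace := by rw [mul_assoc, tr3]
  have h3 : (L*Mᵀ*Nᵀ).trace = (L*(Mᵀ*Nᵀ)).trace := by rw [mul_assoc]
  have h6 : (Mᵀ*L*Nᵀ).trace = (L*(Nᵀ*Mᵀ)).trace := by rw [mul_assoc, tr3]
  have h4 : (Lᵀ*M*Nᵀ).trace = (L*(N*Mᵀ)).trace := by
    rw [← Matrix.trace_transpose (Lᵀ*M*Nᵀ)]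
    simp only [Matrix.transpose_mul, Matrix.transpose_transpose]
    rw [tr3, tr3]
  have h5 : (M*Lᵀ*Nᵀ).trace = (L*(Mᵀ*N)).trace := by
    rw [← Matrix.trace_transpose (M*Lᵀ*Nᵀ)]
    simp only [Matrix.transpose_mul, Matrix.transpose_transpose]
    rw [tr3, tr3]
  have h7 : (Lᵀ*Mᵀ*Nᵀ).trace = (L*(N*M)).trace := by
    rw [← Matrix.trace_transpose (Lᵀ*Mᵀ*Nᵀ)]
    simp only [Matrix.transpose_mul, Matrix.transpose_transpose]
    rw [tr3, tr3]
  have h8 : (Mᵀ*Lᵀ*Nᵀ).trace = (L*(M*N)).trace := by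
    rw [← Matrix.trace_transpose (Mᵀ*Lᵀ*Nᵀ)]
    simp only [Matrix.transpose_mul, Matrix.transpose_transpose]
    rw [tr3]
  rw [h1, h2, h3, h4, h5, h6, h7, h8]
  ring
end
end

section
/- For all n×n real matrices L, M, N, the Leibniz rule [[L, M⊙N]] = [[L,M]]⊙N + M⊙[[L,N]] holds. -/
open Matrix

noncomputable section

lemma trans_sym {n : ℕ} (M : Matrix (Fin n) (Fin n) ℝ) : (symPart M)ᵀ = symPart M := by
  unfold symPart; simp [Matrix.transpose_add, add_comm]

lemma trans_skew {n : ℕ} (M : Matrix (Fin n) (Fin n) ℝ) : (skewPart M)ᵀ = -skewPart M := by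
  unfold skewPart
  simp only [Matrix.transpose_smul, Matrix.transpose_sub, Matrix.transpose_transpose, ← smul_neg]
  congr 1; abel

lemma jord_trans {n : ℕ} (X Y : Matrix (Fin n) (Fin n) ℝ) : (jord X Y)ᵀ = jord Xᵀ Yᵀ := by
  unfold jord
  simp only [Matrix.transpose_smul, Matrix.transpose_add, Matrix.transpose_mul]
  rw [add_comm]

lemma mcomm_trans {n : ℕ} (X Y : Matrix (Fin n) (Fin n) ℝ) : (mcomm X Y)ᵀ = mcomm Yᵀ Xᵀ := by
  unfold mcomm
  simp only [Matrix.transpose_sub, Matrix.transpose_mul]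

lemma symPart_help {n : ℕ} (P Q U V : Matrix (Fin n) (Fin n) ℝ)
    (hP : Pᵀ = P) (hQ : Qᵀ = -Q) (hU : Uᵀ = U) (hV : Vᵀ = -V) :
    symPart (jord P U - jord Q V + jord Q U + jord P V) = jord P U - jord Q V := by
  unfold symPart
  simp only [Matrix.transpose_add, Matrix.transpose_sub, jord_trans, hP, hQ, hU, hV]
  unfold jord
  simp only [neg_mul, mul_neg, neg_neg, smul_add, smul_sub, smul_neg, smul_smul]
  module

lemma skewPart_help {n : ℕ} (P Q U V : Matrix (Fin n) (Fin n) ℝ)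
    (hP : Pᵀ = P) (hQ : Qᵀ = -Q) (hU : Uᵀ = U) (hV : Vᵀ = -V) :
    skewPart (jord P U - jord Q V + jord Q U + jord P V) = jord Q U + jord P V := by
  unfold skewPart
  simp only [Matrix.transpose_add, Matrix.transpose_sub, jord_trans, hP, hQ, hU, hV]
  unfold jord
  simp only [neg_mul, mul_neg, neg_neg, smul_add, smul_sub, smul_neg, smul_smul]
  module

lemma symPart_dbr_help {n : ℕ} (A B P Q : Matrix (Fin n) (Fin n) ℝ)
    (hA : Aᵀ = A) (hB : Bᵀ = -B) (hP : Pᵀ = P) (hQ : Qᵀ = -Q) :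
    symPart (mcomm A P - mcomm B Q - mcomm A Q - mcomm B P) = -mcomm A Q - mcomm B P := by
  unfold symPart
  simp only [Matrix.transpose_sub, mcomm_trans, hA, hB, hP, hQ]
  unfold mcomm
  simp only [neg_mul, mul_neg, neg_neg, smul_add, smul_sub, smul_neg, smul_smul]
  module

lemma skewPart_dbr_help {n : ℕ} (A B P Q : Matrix (Fin n) (Fin n) ℝ)
    (hA : Aᵀ = A) (hB : Bᵀ = -B) (hP : Pᵀ = P) (hQ : Qᵀ = -Q) :
    skewPart (mcomm A P - mcomm B Q - mcomm A Q - mcomm B P) = mcomm A P - mcomm B Q := by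
  unfold skewPart
  simp only [Matrix.transpose_sub, mcomm_trans, hA, hB, hP, hQ]
  unfold mcomm
  simp only [neg_mul, mul_neg, neg_neg, smul_add, smul_sub, smul_neg, smul_smul]
  module

lemma key {n : ℕ} (A B P Q U V : Matrix (Fin n) (Fin n) ℝ) :
    mcomm A (jord P U - jord Q V) - mcomm B (jord Q U + jord P V)
      - mcomm A (jord Q U + jord P V) - mcomm B (jord P U - jord Q V)
    = (jord (-mcomm A Q - mcomm B P) U - jord (mcomm A P - mcomm B Q) V
        + jord (mcomm A P - mcomm B Q) U + jord (-mcomm A Q - mcomm B P) V)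
      + (jord P (-mcomm A V - mcomm B U) - jord Q (mcomm A U - mcomm B V)
        + jord Q (-mcomm A V - mcomm B U) + jord P (mcomm A U - mcomm B V)) := by
  unfold mcomm jord
  simp only [smul_add, smul_sub, smul_neg, mul_smul_comm, smul_mul_assoc, smul_smul,
    mul_add, add_mul, mul_sub, sub_mul, neg_mul, mul_neg, neg_neg, mul_assoc]
  module

/-- Leibniz rule: [[L, M⊙N]] = [[L,M]]⊙N + M⊙[[L,N]]. -/
theorem stmt_5 {n : ℕ} (L M N : Matrix (Fin n) (Fin n) ℝ) :
    dbr L (odot M N) = odot (dbr L M) N + odot M (dbr L N) := by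
  have e1 : symPart (odot M N)
      = jord (symPart M) (symPart N) - jord (skewPart M) (skewPart N) :=
    symPart_help (symPart M) (skewPart M) (symPart N) (skewPart N)
      (trans_sym M) (trans_skew M) (trans_sym N) (trans_skew N)
  have e2 : skewPart (odot M N)
      = jord (skewPart M) (symPart N) + jord (symPart M) (skewPart N) :=
    skewPart_help (symPart M) (skewPart M) (symPart N) (skewPart N)
      (trans_sym M) (trans_skew M) (trans_sym N) (trans_skew N)
  have e3 : symPart (dbr L M)
      = -mcomm (symPart L) (skewPart M) - mcomm (skewPart L) (symPart M) :=
    symPart_dbr_help (symPart L) (skewPart L) (symPart M) (skewPart M)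
      (trans_sym L) (trans_skew L) (trans_sym M) (trans_skew M)
  have e4 : skewPart (dbr L M)
      = mcomm (symPart L) (symPart M) - mcomm (skewPart L) (skewPart M) :=
    skewPart_dbr_help (symPart L) (skewPart L) (symPart M) (skewPart M)
      (trans_sym L) (trans_skew L) (trans_sym M) (trans_skew M)
  have e5 : symPart (dbr L N)
      = -mcomm (symPart L) (skewPart N) - mcomm (skewPart L) (symPart N) :=
    symPart_dbr_help (symPart L) (skewPart L) (symPart N) (skewPart N)
      (trans_sym L) (trans_skew L) (trans_sym N) (trans_skew N)
  have e6 : skewPart (dbr L N)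
      = mcomm (symPart L) (symPart N) - mcomm (skewPart L) (skewPart N) :=
    skewPart_dbr_help (symPart L) (skewPart L) (symPart N) (skewPart N)
      (trans_sym L) (trans_skew L) (trans_sym N) (trans_skew N)
  show mcomm (symPart L) (symPart (odot M N)) - mcomm (skewPart L) (skewPart (odot M N))
      - mcomm (symPart L) (skewPart (odot M N)) - mcomm (skewPart L) (symPart (odot M N))
    = (jord (symPart (dbr L M)) (symPart N) - jord (skewPart (dbr L M)) (skewPart N)
        + jord (skewPart (dbr L M)) (symPart N) + jord (symPart (dbr L M)) (skewPart N))
      + (jord (symPart M) (symPart (dbr L N)) - jord (skewPart M) (skewPart (dbr L N))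
        + jord (skewPart M) (symPart (dbr L N)) + jord (symPart M) (skewPart (dbr L N)))
  rw [e1, e2, e3, e4, e5, e6]
  exact key (symPart L) (skewPart L) (symPart M) (skewPart M) (symPart N) (skewPart N)
end
end

section
/- For all n×n real matrices L, M, the relation ((ρ(L_A), M)) = ((L, a(M))) holds, where a(M) = ρ(M_S). -/
open Matrix

noncomputable section

lemma form_apply {n : ℕ} (L M : Matrix (Fin n) (Fin n) ℝ) :
    form L M = ∑ i, ∑ j, L i j * M i j := by
  simp [form, Matrix.trace, Matrix.mul_apply, Matrix.diag]

/-- ((ρ(L_A), M)) = ((L, a(M))). -/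
theorem stmt_8 {n : ℕ} (L M : Matrix (Fin n) (Fin n) ℝ) :
    form (rho (skewPart L)) M = form L (aMap M) := by
  set F : Fin n → Fin n → ℝ := fun i j => rho (skewPart L) i j * M i j with hF
  set G : Fin n → Fin n → ℝ := fun i j => L i j * aMap M i j with hG
  have key : ∀ i j, F i j + F j i = G i j + G j i := by
    intro i j
    rcases lt_trichotomy i j with h | h | h
    · simp [hF, hG, rho, skewPart, aMap, symPart, h, h.not_gt, h.ne, h.ne']
      ring
    · simp [hF, hG, rho, aMap, h]
    · simp [hF, hG, rho, skewPart, aMap, symPart, h, h.not_gt, h.ne, h.ne']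
      ring
  have hsum : ∑ i, ∑ j, (F i j + F j i) = ∑ i, ∑ j, (G i j + G j i) := by
    exact Finset.sum_congr rfl fun i _ => Finset.sum_congr rfl fun j _ => key i j
  have hFs : ∑ i, ∑ j, F j i = ∑ i, ∑ j, F i j := Finset.sum_comm
  have hGs : ∑ i, ∑ j, G j i = ∑ i, ∑ j, G i j := Finset.sum_comm
  have h2 : 2 * (∑ i, ∑ j, F i j) = 2 * (∑ i, ∑ j, G i j) := by
    simpa [Finset.sum_add_distrib, hFs, hGs, two_mul] using hsum
  rw [form_apply, form_apply]
  exact mul_left_cancel₀ (two_ne_zero (α := ℝ)) h2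
end
end

section
/- For all n×n real matrices L, M, N, the adjoint identity ((L⊙ρ(M_A) + M⊙ρ(L_A), N)) = ((M, N⊙ρ(L_A) + a(L⊙N))) holds. (This computes the transpose, with respect to ((·,·)), of the derivative of the vector field Y(L) = L⊙ρ(L_A) used to show that the Sklyanin structure is the Lie derivative of the linear structure along Y.) -/
open Matrix

noncomputable section

-- Auxiliary lemmas

lemma form_add_left {n : ℕ} (A B C : Matrix (Fin n) (Fin n) ℝ) :
    form (A + B) C = form A C + form B C := by
  simp [form, Matrix.add_mul]

lemma form_add_right {n : ℕ} (A B C : Matrix (Fin n) (Fin n) ℝ) :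
    form A (B + C) = form A B + form A C := by
  simp [form, Matrix.mul_add]

lemma form_smul_left {n : ℕ} (c : ℝ) (A B : Matrix (Fin n) (Fin n) ℝ) :
    form (c • A) B = c * form A B := by
  simp [form, Matrix.smul_mul]

lemma form_smul_right {n : ℕ} (c : ℝ) (A B : Matrix (Fin n) (Fin n) ℝ) :
    form A (c • B) = c * form A B := by
  simp [form, Matrix.mul_smul]

lemma form_transpose {n : ℕ} (A B : Matrix (Fin n) (Fin n) ℝ) :
    form Aᵀ B = form A Bᵀ := by
  have h1 : Aᵀ * Bᵀ = (B * A)ᵀ := by rw [Matrix.transpose_mul]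
  simp only [form, Matrix.transpose_transpose]
  rw [h1, Matrix.trace_transpose, Matrix.trace_mul_comm]

lemma form_mul_left {n : ℕ} (A X N : Matrix (Fin n) (Fin n) ℝ) :
    form (A * X) N = form X (Aᵀ * N) := by
  simp only [form, Matrix.transpose_mul, Matrix.transpose_transpose]
  rw [Matrix.mul_assoc, Matrix.trace_mul_comm, Matrix.mul_assoc]

lemma form_mul_right {n : ℕ} (A X N : Matrix (Fin n) (Fin n) ℝ) :
    form (X * A) N = form X (N * Aᵀ) := by
  simp [form, Matrix.transpose_mul, Matrix.transpose_transpose, Matrix.mul_assoc]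

lemma symPart_add_skewPart {n : ℕ} (L : Matrix (Fin n) (Fin n) ℝ) :
    symPart L + skewPart L = L := by
  unfold symPart skewPart
  module

lemma form_skew {n : ℕ} (Mm X : Matrix (Fin n) (Fin n) ℝ) :
    form (skewPart Mm) X = form Mm (skewPart X) := by
  unfold skewPart
  rw [form_smul_left, form_smul_right]
  congr 1
  have h1 : form (Mm - Mmᵀ) X = form Mm X - form Mmᵀ X := by
    simp [form, Matrix.sub_mul]
  have h2 : form Mm (X - Xᵀ) = form Mm X - form Mm Xᵀ := by
    simp [form, Matrix.mul_sub]
  rw [h1, h2, form_transpose]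

lemma jord_add_left {n : ℕ} (A B C : Matrix (Fin n) (Fin n) ℝ) :
    jord (A + B) C = jord A C + jord B C := by
  unfold jord
  rw [Matrix.add_mul, Matrix.mul_add]
  module

lemma symPart_of_symm {n : ℕ} {Y : Matrix (Fin n) (Fin n) ℝ} (hY : Yᵀ = Y) :
    symPart Y = Y := by
  unfold symPart; rw [hY]; module

lemma skewPart_of_symm {n : ℕ} {Y : Matrix (Fin n) (Fin n) ℝ} (hY : Yᵀ = Y) :
    skewPart Y = 0 := by
  unfold skewPart; rw [hY]; simp

lemma jord_zero {n : ℕ} (A : Matrix (Fin n) (Fin n) ℝ) : jord A 0 = 0 := by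
  simp [jord]

lemma odot_symm {n : ℕ} (L : Matrix (Fin n) (Fin n) ℝ)
    {Y : Matrix (Fin n) (Fin n) ℝ} (hY : Yᵀ = Y) :
    odot L Y = jord L Y := by
  unfold odot
  rw [symPart_of_symm hY, skewPart_of_symm hY, jord_zero, jord_zero, sub_zero, add_zero,
    ← jord_add_left, symPart_add_skewPart]

lemma form_jord_left {n : ℕ} (A X N : Matrix (Fin n) (Fin n) ℝ) :
    form (jord A X) N = form X (jord Aᵀ N) := by
  unfold jord
  rw [form_smul_left, form_smul_right]
  congr 1
  have h1 : form (A * X + X * A) N = form (A * X) N + form (X * A) N := by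
    simp [form, Matrix.add_mul]
  have h2 : form X (Aᵀ * N + N * Aᵀ) = form X (Aᵀ * N) + form X (N * Aᵀ) := by
    simp [form, Matrix.mul_add]
  rw [h1, h2, form_mul_left, form_mul_right]

lemma form_jord_symm {n : ℕ} (Mm N : Matrix (Fin n) (Fin n) ℝ)
    {Z : Matrix (Fin n) (Fin n) ℝ} (hZ : Zᵀ = Z) :
    form (jord Mm Z) N = form Mm (jord N Z) := by
  unfold jord
  rw [form_smul_left, form_smul_right]
  congr 1
  have h1 : form (Mm * Z + Z * Mm) N = form (Mm * Z) N + form (Z * Mm) N := by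
    simp [form, Matrix.add_mul]
  have h2 : form Mm (N * Z + Z * N) = form Mm (N * Z) + form Mm (Z * N) := by
    simp [form, Matrix.mul_add]
  rw [h1, h2, form_mul_right Z Mm N, form_mul_left Z Mm N, hZ, add_comm]

lemma rho_skew_symm {n : ℕ} (L : Matrix (Fin n) (Fin n) ℝ) :
    (rho (skewPart L))ᵀ = rho (skewPart L) := by
  ext i j
  simp only [Matrix.transpose_apply, rho, skewPart, Matrix.of_apply, Matrix.smul_apply,
    Matrix.sub_apply, Matrix.transpose_apply, smul_eq_mul]
  rcases lt_trichotomy i j with h | h | h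
  · simp [h, not_lt_of_gt h] <;> ring
  · simp [h]
  · simp [h, not_lt_of_gt h] <;> ring

lemma skewPart_rho {n : ℕ} (X : Matrix (Fin n) (Fin n) ℝ) :
    skewPart (rho X) = rho (symPart X) := by
  ext i j
  simp only [skewPart, symPart, rho, Matrix.smul_apply, Matrix.sub_apply, Matrix.add_apply,
    Matrix.transpose_apply, Matrix.of_apply, smul_eq_mul]
  rcases lt_trichotomy i j with h | h | h
  · simp [h, not_lt_of_gt h] <;> ring
  · simp [h]
  · simp [h, not_lt_of_gt h] <;> ring

lemma rho_selfadj {n : ℕ} (X W : Matrix (Fin n) (Fin n) ℝ) :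
    form (rho X) W = form X (rho W) := by
  simp only [form, Matrix.trace, Matrix.diag_apply, Matrix.mul_apply, Matrix.transpose_apply,
    rho, Matrix.of_apply]
  refine Finset.sum_congr rfl fun i _ => Finset.sum_congr rfl fun j _ => ?_
  rcases lt_trichotomy i j with h | h | h
  · simp [h, not_lt_of_gt h]
  · simp [h]
  · simp [h, not_lt_of_gt h]

lemma symPart_jord_transpose {n : ℕ} (L N : Matrix (Fin n) (Fin n) ℝ) :
    symPart (jord Lᵀ N) = symPart (odot L N) := by
  simp only [odot, jord, symPart, skewPart]
  simp only [Matrix.transpose_add, Matrix.transpose_sub, Matrix.transpose_smul,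
    Matrix.transpose_mul, Matrix.transpose_transpose, Matrix.add_mul, Matrix.mul_add,
    Matrix.sub_mul, Matrix.mul_sub, smul_mul_assoc, mul_smul_comm,
    smul_add, smul_sub, smul_smul]
  module

/-- Adjoint identity for the derivative of the vector field Y(L) = L⊙ρ(L_A). -/
theorem stmt_9 {n : ℕ} (L M N : Matrix (Fin n) (Fin n) ℝ) :
    form (odot L (rho (skewPart M)) + odot M (rho (skewPart L))) N
      = form M (odot N (rho (skewPart L)) + aMap (odot L N)) := by
  have hY : (rho (skewPart M))ᵀ = rho (skewPart M) := rho_skew_symm M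
  have hZ : (rho (skewPart L))ᵀ = rho (skewPart L) := rho_skew_symm L
  rw [form_add_left, form_add_right]
  have h1 : form (odot L (rho (skewPart M))) N = form M (aMap (odot L N)) := by
    rw [odot_symm L hY, form_jord_left, rho_selfadj, form_skew, skewPart_rho,
      symPart_jord_transpose]
    rfl
  have h2 : form (odot M (rho (skewPart L))) N = form M (odot N (rho (skewPart L))) := by
    rw [odot_symm M hZ, form_jord_symm M N hZ, ← odot_symm N hZ]
  rw [h1, h2, add_comm]
end
end

section
/- For all n×n real matrices L and G, with F = I (the gradient of the Hamiltonian H_Skl = tr(L) with respect to ((·,·))), one has ((L⊙ρ(L_A), [[I,G]])) − ((L, [[I⊙ρ(L_A) + a(L⊙I), G]] + [[I, G⊙ρ(L_A) + a(L⊙G)]])) = −((L, [[ρ(L), G]])). (This is the Sklyanin half of the trihamiltonian recursion P_Skl dH_Skl = P_Lin dH_Lin.) -/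
open Matrix

noncomputable section

lemma symPart_one {n : ℕ} : symPart (1 : Matrix (Fin n) (Fin n) ℝ) = 1 := by
  simp [symPart]; module

lemma skewPart_one {n : ℕ} : skewPart (1 : Matrix (Fin n) (Fin n) ℝ) = 0 := by
  simp [skewPart]

lemma jord_one_left {n : ℕ} (X : Matrix (Fin n) (Fin n) ℝ) : jord 1 X = X := by
  simp [jord]; module

lemma jord_one_right {n : ℕ} (X : Matrix (Fin n) (Fin n) ℝ) : jord X 1 = X := by
  simp [jord]; module

lemma dbr_one_left {n : ℕ} (G : Matrix (Fin n) (Fin n) ℝ) : dbr 1 G = 0 := by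
  simp [dbr, symPart_one, skewPart_one, mcomm, jord]

lemma odot_one_left {n : ℕ} (X : Matrix (Fin n) (Fin n) ℝ) : odot 1 X = X := by
  simp [odot, symPart_one, skewPart_one, jord_one_left, jord]
  simp [symPart, skewPart]; module

lemma odot_one_right {n : ℕ} (X : Matrix (Fin n) (Fin n) ℝ) : odot X 1 = X := by
  simp [odot, symPart_one, skewPart_one, jord_one_right, jord]
  simp [symPart, skewPart]; module

lemma rho_split {n : ℕ} (L : Matrix (Fin n) (Fin n) ℝ) :
    rho (skewPart L) + aMap L = rho L := by
  ext i j
  simp [rho, aMap, symPart, skewPart, Matrix.add_apply, Matrix.smul_apply,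
    Matrix.transpose_apply]
  split_ifs <;> ring

lemma form_zero_right {n : ℕ} (X : Matrix (Fin n) (Fin n) ℝ) : form X 0 = 0 := by
  simp [form]

/-- The Sklyanin half of the recursion P_Skl dH_Skl = P_Lin dH_Lin. -/
theorem stmt_12 {n : ℕ} (L G : Matrix (Fin n) (Fin n) ℝ) :
    form (odot L (rho (skewPart L))) (dbr (1 : Matrix (Fin n) (Fin n) ℝ) G)
      - form L (dbr (odot (1 : Matrix (Fin n) (Fin n) ℝ) (rho (skewPart L))
            + aMap (odot L (1 : Matrix (Fin n) (Fin n) ℝ))) G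
          + dbr (1 : Matrix (Fin n) (Fin n) ℝ)
            (odot G (rho (skewPart L)) + aMap (odot L G)))
      = - form L (dbr (rho L) G) := by
  rw [dbr_one_left, dbr_one_left, odot_one_left, odot_one_right, form_zero_right,
    rho_split, add_zero, zero_sub]
end
end

section
/- For all n×n real matrices L and M, tr(L_A ∙ a(M)) + tr(M_A ∙ a(L)) = −((ρ(L), M)) = −tr(ρ(L) Mᵀ). (This computes the directional derivative of the Hamiltonian H_Lin(L) = tr(L_A ∙ a(L)) in the direction M, so that its gradient with respect to ((·,·)) is −ρ(L).) -/
open Matrix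

noncomputable section

lemma sum_skew {n : ℕ} (F : Fin n → Fin n → ℝ) (h : ∀ i j, F i j + F j i = 0) :
    ∑ i, ∑ j, F i j = 0 := by
  have comm : ∑ i : Fin n, ∑ j, F j i = ∑ i, ∑ j, F i j := Finset.sum_comm
  have key : ∑ i : Fin n, ∑ j, (F i j + F j i) = 0 := by simp [h]
  simp only [Finset.sum_add_distrib] at key
  linarith

/-- The gradient of H_Lin(L) = tr(L_A ∙ a(L)) with respect to ((·,·)) is −ρ(L). -/
theorem stmt_13 {n : ℕ} (L M : Matrix (Fin n) (Fin n) ℝ) :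
    (jord (skewPart L) (aMap M)).trace + (jord (skewPart M) (aMap L)).trace
        = - form (rho L) M
      ∧ form (rho L) M = (rho L * Mᵀ).trace := by
  refine ⟨?_, rfl⟩
  have tr_jord : ∀ (A B : Matrix (Fin n) (Fin n) ℝ), (jord A B).trace = (A * B).trace := by
    intro A B
    rw [jord, Matrix.trace_smul, Matrix.trace_add, Matrix.trace_mul_comm B A]
    simp; ring
  rw [tr_jord, tr_jord]
  have e : ∀ (X Y : Matrix (Fin n) (Fin n) ℝ), (X * Y).trace = ∑ i, ∑ j, X i j * Y j i := by
    intro X Y; simp [Matrix.trace, Matrix.mul_apply, Matrix.diag]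
  have main : ∑ i, ∑ j, (skewPart L i j * aMap M j i + skewPart M i j * aMap L j i
      + rho L i j * Mᵀ j i) = 0 := by
    apply sum_skew
    intro i j
    simp only [skewPart, aMap, rho, symPart, Matrix.transpose_apply, Matrix.smul_apply,
      Matrix.add_apply, Matrix.sub_apply, Matrix.of_apply, smul_eq_mul]
    rcases lt_trichotomy i j with h | h | h
    · simp only [h, h.not_gt, if_true, if_false]; ring
    · simp only [h, lt_irrefl, if_false]; ring
    · simp only [h, h.not_gt, if_true, if_false]; ring
  have split : ∑ i, ∑ j, (skewPart L i j * aMap M j i + skewPart M i j * aMap L j i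
      + rho L i j * Mᵀ j i)
      = (∑ i, ∑ j, skewPart L i j * aMap M j i) + (∑ i, ∑ j, skewPart M i j * aMap L j i)
        + (∑ i, ∑ j, rho L i j * Mᵀ j i) := by
    simp [Finset.sum_add_distrib]
  rw [split] at main
  have hform : form (rho L) M = ∑ i, ∑ j, rho L i j * Mᵀ j i := e _ _
  rw [e, e, hform]
  linarith
end
end

section
/- Let V be the space of n×n real matrices with the nondegenerate invariant pairing ⟨A,B⟩ = tr(AB). Let f, g : V → ℝ be differentiable with gradient fields F, G : V → V, i.e. for all L, M: (Df)_L(M) = ⟨F(L), M⟩ and (Dg)_L(M) = ⟨G(L), M⟩, where F, G are differentiable. Let X : V → V be a differentiable vector field, and for each L let D_F(L), D_G(L) ∈ V be the adjoints defined by ⟨D_F(L), M⟩ = ⟨F(L), (DX)_L(M)⟩ and ⟨D_G(L), M⟩ = ⟨G(L), (DX)_L(M)⟩ for all M. Define the Lie–Poisson bracket {f,g}_P(L) = ⟨L, [F(L), G(L)]⟩, and let ∇(Xf), ∇(Xg) : V → V be gradient fields of the functions L ↦ (Df)_L(X(L)) and L ↦ (Dg)_L(X(L)). Then for every L: (D{f,g}_P)_L(X(L))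 − ⟨L, [∇(Xf)(L), G(L)]⟩ − ⟨L, [F(L), ∇(Xg)(L)]⟩ = ⟨X(L), [F(L), G(L)]⟩ − ⟨L, [D_F(L), G(L)] + [F(L), D_G(L)]⟩. (This is the formula for the Poisson bracket obtained from the Lie derivative of the Lie–Poisson tensor along X.) -/
/-!
Since `F` is the gradient of `f` for the trace pairing, symmetry of the second derivative of `f`
makes `F'(L)` self-adjoint for that pairing. Hence the gradient of `Xf = ⟨F, X⟩` is
`F'(L)(X L) + D_F(L)`, and similarly for `g`. Expanding the derivative of `⟨L, [F, G]⟩` along `X`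
by the product rule, the Hessian terms `[F'(L)(X L), G]` and `[F, G'(L)(X L)]` cancel against
those coming from `∇(Xf)` and `∇(Xg)`.
-/

open Matrix

attribute [local instance] Matrix.normedAddCommGroup Matrix.normedSpace

section Bilinear

variable {𝕜 E F G H : Type*} [NontriviallyNormedField 𝕜]
  [NormedAddCommGroup E] [NormedSpace 𝕜 E] [NormedAddCommGroup F] [NormedSpace 𝕜 F]
  [NormedAddCommGroup G] [NormedSpace 𝕜 G] [NormedAddCommGroup H] [NormedSpace 𝕜 H]

theorem ContinuousLinearMap.fderiv_of_bilinear_apply (B : E →L[𝕜] F →L[𝕜] G) {f : H → E}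
    {g : H → F} {f' : H →L[𝕜] E} {g' : H →L[𝕜] F} {x : H} (hf : HasFDerivAt f f' x)
    (hg : HasFDerivAt g g' x) (v : H) :
    fderiv 𝕜 (fun y => B (f y) (g y)) x v = B (f' v) (g x) + B (f x) (g' v) := by
  rw [(B.hasFDerivAt_of_bilinear hf hg).fderiv]
  simp [add_comm]

end Bilinear

section Gradient

variable {E F : Type*} [NormedAddCommGroup E] [NormedSpace ℝ E] [NormedAddCommGroup F]
  [NormedSpace ℝ F] (B : F →L[ℝ] E →L[ℝ] ℝ) {f : E → ℝ} {grad : E → F} {x : E}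

theorem pairing_fderiv_gradient_comm (hf : ∀ y, HasFDerivAt f (B (grad y)) y)
    (hgrad : DifferentiableAt ℝ grad x) (v w : E) :
    B (fderiv ℝ grad x v) w = B (fderiv ℝ grad x w) v := by
  simpa using second_derivative_symmetric hf (B.hasFDerivAt.comp x hgrad.hasFDerivAt) v w

theorem fderiv_fderiv_apply_of_gradient (hf : ∀ y, HasFDerivAt f (B (grad y)) y)
    (hgrad : DifferentiableAt ℝ grad x) {X : E → E} (hX : DifferentiableAt ℝ X x) (v : E) :
    fderiv ℝ (fun y => fderiv ℝ f y (X y)) x v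
      = B (fderiv ℝ grad x (X x)) v + B (grad x) (fderiv ℝ X x v) := by
  have hfX : (fun y => fderiv ℝ f y (X y)) = fun y => B (grad y) (X y) :=
    funext fun y => by rw [(hf y).fderiv]
  rw [hfX, B.fderiv_of_bilinear_apply hgrad.hasFDerivAt hX.hasFDerivAt,
    pairing_fderiv_gradient_comm B hf hgrad]

end Gradient

/- `fderiv` on matrices uses the product topology, the lemmas above the norm topology; these agree
only up to unfolding instances, so the general lemmas enter through terms in `calc`, not `rw`. -/
namespace Matrix

variable {m : Type*} [Fintype m]

noncomputable def traceForm (m : Type*) [Fintype m] :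
    Matrix m m ℝ →L[ℝ] Matrix m m ℝ →L[ℝ] ℝ :=
  ((LinearMap.mul ℝ (Matrix m m ℝ)).compr₂ (traceLinearMap m ℝ ℝ)).toContinuousBilinearMap

@[simp] theorem traceForm_apply (A B : Matrix m m ℝ) : traceForm m A B = (A * B).trace := rfl

noncomputable def commutatorCLM (m : Type*) [Fintype m] :
    Matrix m m ℝ →L[ℝ] Matrix m m ℝ →L[ℝ] Matrix m m ℝ :=
  (LinearMap.mul ℝ (Matrix m m ℝ) - (LinearMap.mul ℝ (Matrix m m ℝ)).flip).toContinuousBilinearMap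

@[simp] theorem commutatorCLM_apply (A B : Matrix m m ℝ) :
    commutatorCLM m A B = A * B - B * A :=
  rfl

def IsTraceGradient (f : Matrix m m ℝ → ℝ) (F : Matrix m m ℝ → Matrix m m ℝ) : Prop :=
  ∀ L M, fderiv ℝ f L M = (F L * M).trace

variable {f : Matrix m m ℝ → ℝ} {F X : Matrix m m ℝ → Matrix m m ℝ}

theorem IsTraceGradient.hasFDerivAt (hF : IsTraceGradient f F) (hf : Differentiable ℝ f)
    (L : Matrix m m ℝ) : HasFDerivAt f (traceForm m (F L)) L := by
  convert (hf L).hasFDerivAt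
  ext M
  simp [hF L M]

theorem IsTraceGradient.eq_fderiv_apply_add (hF : IsTraceGradient f F) (hf : Differentiable ℝ f)
    (hFd : Differentiable ℝ F) (hXd : Differentiable ℝ X) {DF gXf : Matrix m m ℝ → Matrix m m ℝ}
    (hDF : ∀ L M, (DF L * M).trace = (F L * fderiv ℝ X L M).trace)
    (hgXf : IsTraceGradient (fun L => fderiv ℝ f L (X L)) gXf) (L : Matrix m m ℝ) :
    gXf L = fderiv ℝ F L (X L) + DF L := by
  refine ext_iff_trace_mul_right.2 fun M => ?_
  calc (gXf L * M).trace = fderiv ℝ (fun L => fderiv ℝ f L (X L)) L M := (hgXf L M).symm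
    _ = (fderiv ℝ F L (X L) * M).trace + (F L * fderiv ℝ X L M).trace :=
        fderiv_fderiv_apply_of_gradient (traceForm m) (hF.hasFDerivAt hf) (hFd L) (hXd L) M
    _ = ((fderiv ℝ F L (X L) + DF L) * M).trace := by rw [← hDF, add_mul, trace_add]

theorem fderiv_trace_mul_commutator {G : Matrix m m ℝ → Matrix m m ℝ} (hFd : Differentiable ℝ F)
    (hGd : Differentiable ℝ G) (L v : Matrix m m ℝ) :
    fderiv ℝ (fun L' => (L' * (F L' * G L' - G L' * F L')).trace) L v
      = (v * (F L * G L - G L * F L)).trace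
        + (L * ((fderiv ℝ F L v * G L - G L * fderiv ℝ F L v)
          + (F L * fderiv ℝ G L v - fderiv ℝ G L v * F L))).trace := by
  have hC : DifferentiableAt ℝ (fun L' => commutatorCLM m (F L') (G L')) L := by fun_prop
  calc fderiv ℝ (fun L' => (L' * (F L' * G L' - G L' * F L')).trace) L v
      = (v * (F L * G L - G L * F L)).trace
        + (L * fderiv ℝ (fun L' => F L' * G L' - G L' * F L') L v).trace :=
        (traceForm m).fderiv_of_bilinear_apply (hasFDerivAt_id L) hC.hasFDerivAt v
    _ = _ := by
        congr 3
        exact (commutatorCLM m).fderiv_of_bilinear_apply (hFd L).hasFDerivAt (hGd L).hasFDerivAt v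

end Matrix

/-- The Poisson bracket obtained from the Lie derivative of the Lie–Poisson
tensor along a vector field X. -/
theorem stmt_18 {n : ℕ}
    (f g : Matrix (Fin n) (Fin n) ℝ → ℝ)
    (F G X DF DG gXf gXg : Matrix (Fin n) (Fin n) ℝ → Matrix (Fin n) (Fin n) ℝ)
    (hf : Differentiable ℝ f) (hg : Differentiable ℝ g)
    (hFd : Differentiable ℝ F) (hGd : Differentiable ℝ G)
    (hXd : Differentiable ℝ X)
    (hF : ∀ L M, fderiv ℝ f L M = (F L * M).trace)
    (hG : ∀ L M, fderiv ℝ g L M = (G L * M).trace)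
    (hDF : ∀ L M, (DF L * M).trace = (F L * (fderiv ℝ X L M)).trace)
    (hDG : ∀ L M, (DG L * M).trace = (G L * (fderiv ℝ X L M)).trace)
    (hgXf : ∀ L M, fderiv ℝ (fun L' => fderiv ℝ f L' (X L')) L M = (gXf L * M).trace)
    (hgXg : ∀ L M, fderiv ℝ (fun L' => fderiv ℝ g L' (X L')) L M = (gXg L * M).trace) :
    ∀ L : Matrix (Fin n) (Fin n) ℝ,
      fderiv ℝ (fun L' => (L' * (F L' * G L' - G L' * F L')).trace) L (X L)
          - (L * (gXf L * G L - G L * gXf L)).trace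
          - (L * (F L * gXg L - gXg L * F L)).trace
        = (X L * (F L * G L - G L * F L)).trace
          - (L * ((DF L * G L - G L * DF L) + (F L * DG L - DG L * F L))).trace := by
  intro L
  rw [fderiv_trace_mul_commutator hFd hGd,
    IsTraceGradient.eq_fderiv_apply_add hF hf hFd hXd hDF hgXf,
    IsTraceGradient.eq_fderiv_apply_add hG hg hGd hXd hDG hgXg]
  simp only [add_mul, mul_add, mul_sub, trace_add, trace_sub]
  ring
end
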